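/- arXiv:1608.08547 — 2 statements merged into one kernel-verified Lean document; each statement's English description precedes it below -/
import Mathlib

section
/- If a bipartite graph H between vertex sets of sizes p and q is given, then H is a graph minor of the Chimera graph F(⌈q/c⌉, ⌈p/c⌉, c), for any positive integer c. -/
/-- Ceiling division `⌈a/b⌉` on naturals. -/
def ceilDiv (a b : ℕ) : ℕ := (a + b - 1) / b

/-- The Chimera graph `F(r,s,c)`: an `r × s` grid of `K_{c,c}` cells.  A vertex
`(row, col, side, idx)` has `side = false` for the "left" half of its cell and
`side = true` for the "right" half.  Within a cell the two sides are completely joined;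
left vertices are joined to the corresponding left vertices of vertically adjacent cells
and right vertices to the corresponding right vertices of horizontally adjacent cells. -/
def chimera (r s c : ℕ) : SimpleGraph (Fin r × Fin s × Bool × Fin c) where
  Adj v w :=
    (v.1 = w.1 ∧ v.2.1 = w.2.1 ∧ v.2.2.1 ≠ w.2.2.1) ∨
    (v.2.2.1 = false ∧ w.2.2.1 = false ∧ v.2.1 = w.2.1 ∧ v.2.2.2 = w.2.2.2 ∧
      ((v.1 : ℕ) + 1 = w.1 ∨ (w.1 : ℕ) + 1 = v.1)) ∨
    (v.2.2.1 = true ∧ w.2.2.1 = true ∧ v.1 = w.1 ∧ v.2.2.2 = w.2.2.2 ∧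
      ((v.2.1 : ℕ) + 1 = w.2.1 ∨ (w.2.1 : ℕ) + 1 = v.2.1))
  symm := by
    constructor
    rintro v w (⟨h1, h2, h3⟩ | ⟨h1, h2, h3, h4, h5⟩ | ⟨h1, h2, h3, h4, h5⟩)
    · exact Or.inl ⟨h1.symm, h2.symm, h3.symm⟩
    · exact Or.inr (Or.inl ⟨h2, h1, h3.symm, h4.symm, h5.symm⟩)
    · exact Or.inr (Or.inr ⟨h2, h1, h3.symm, h4.symm, h5.symm⟩)
  loopless := by
    constructor
    rintro v (⟨_, _, h⟩ | ⟨_, _, _, _, h | h⟩ | ⟨_, _, _, _, h | h⟩)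
    · exact h rfl
    all_goals omega

/-- The complete bipartite graph `K_{p,q}`. -/
def completeBipartite (p q : ℕ) : SimpleGraph (Fin p ⊕ Fin q) where
  Adj u v := u.isLeft ≠ v.isLeft
  symm := ⟨fun _ _ h => h.symm⟩
  loopless := ⟨fun _ h => h rfl⟩

/-- `G` is a minor of `G'`: each vertex of `G` maps to a nonempty connected subtree
(equivalently, connected vertex set) of `G'`, the sets for distinct vertices are disjoint,
and each edge of `G` is realized by an edge of `G'` between the corresponding sets. -/
def IsMinorOf {α β : Type*} (G : SimpleGraph α) (G' : SimpleGraph β) : Prop :=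
  ∃ φ : α → Set β,
    (∀ v, (φ v).Nonempty) ∧
    (∀ v, (G'.induce (φ v)).Connected) ∧
    (∀ u v, u ≠ v → Disjoint (φ u) (φ v)) ∧
    (∀ u v, G.Adj u v → ∃ a ∈ φ u, ∃ b ∈ φ v, G'.Adj a b)

/-- The chained-OR gadget graph `L_n`: vertices `t₁,…,t_n` (as `Sum.inl`, 0-indexed) and
`x₁,…,x_{n-1}` (as `Sum.inr`, 0-indexed), with edges `(t₁,t₂), (t₁,x₁), (t₂,x₁)` and, for
`i = 2,…,n-1`, `(x_{i-1},x_i), (x_{i-1},t_{i+1}), (x_i,t_{i+1})`. -/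
def Ln (n : ℕ) : SimpleGraph (Fin n ⊕ Fin (n - 1)) where
  Adj u v :=
    match u, v with
    | Sum.inl t, Sum.inl t' => ((t : ℕ) = 0 ∧ (t' : ℕ) = 1) ∨ ((t : ℕ) = 1 ∧ (t' : ℕ) = 0)
    | Sum.inl t, Sum.inr x =>
        ((t : ℕ) ≤ 1 ∧ (x : ℕ) = 0) ∨ (2 ≤ (t : ℕ) ∧ ((x : ℕ) + 2 = t ∨ (x : ℕ) + 1 = t))
    | Sum.inr x, Sum.inl t =>
        ((t : ℕ) ≤ 1 ∧ (x : ℕ) = 0) ∨ (2 ≤ (t : ℕ) ∧ ((x : ℕ) + 2 = t ∨ (x : ℕ) + 1 = t))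
    | Sum.inr x, Sum.inr x' => (x : ℕ) + 1 = x' ∨ (x' : ℕ) + 1 = x
  symm := by
    constructor
    rintro (t | x) (t' | x') h <;> dsimp only at h ⊢ <;> tauto
  loopless := by
    constructor
    rintro (t | x) h <;> dsimp only at h <;> omega

lemma div_lt_ceilDiv {i p c : ℕ} (hc : 0 < c) (h : i < p) : i / c < ceilDiv p c := by
  unfold ceilDiv
  have h1 : p + c - 1 = (p - 1) + c := by omega
  rw [h1, Nat.add_div_right _ hc]
  exact Nat.lt_succ_of_le (Nat.div_le_div_right (by omega))

lemma ceilDiv_pos {p c : ℕ} (hc : 0 < c) (hp : 0 < p) : 0 < ceilDiv p c := by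
  have := div_lt_ceilDiv hc hp
  simpa using this

lemma connected_of_chain {β : Type*} (G : SimpleGraph β) (S : Set β) (n : ℕ) (hn : 0 < n)
    (f : Fin n → β) (hmem : ∀ k, f k ∈ S) (hsurj : ∀ v ∈ S, ∃ k, f k = v)
    (hadj : ∀ (k : ℕ) (h : k + 1 < n), G.Adj (f ⟨k, Nat.lt_of_succ_lt h⟩) (f ⟨k + 1, h⟩)) :
    (G.induce S).Connected := by
  rw [SimpleGraph.connected_iff]
  set e : Fin n → ↥S := fun k => ⟨f k, hmem k⟩ with he
  refine ⟨?_, ⟨e ⟨0, hn⟩⟩⟩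
  have aux : ∀ (k : ℕ) (hk : k < n), (G.induce S).Reachable (e ⟨0, hn⟩) (e ⟨k, hk⟩) := by
    intro k
    induction k with
    | zero => intro hk; exact SimpleGraph.Reachable.refl _
    | succ k ih =>
      intro hk
      refine (ih (Nat.lt_of_succ_lt hk)).trans (SimpleGraph.Adj.reachable ?_)
      exact hadj k hk
  intro a b
  obtain ⟨ka, hka⟩ := hsurj a a.2
  obtain ⟨kb, hkb⟩ := hsurj b b.2
  have ha : a = e ⟨ka.1, ka.2⟩ := Subtype.ext hka.symm
  have hb : b = e ⟨kb.1, kb.2⟩ := Subtype.ext hkb.symm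
  rw [ha, hb]
  exact (aux ka.1 ka.2).symm.trans (aux kb.1 kb.2)

/-- Any bipartite graph `H` between vertex sets of sizes `p` and `q` is a
minor of the Chimera graph `F(⌈q/c⌉, ⌈p/c⌉, c)`, for any positive integer `c`. -/
theorem stmt_9 (p q c : ℕ) (hp : 0 < p) (hq : 0 < q) (hc : 0 < c)
    (H : SimpleGraph (Fin p ⊕ Fin q))
    (hbip : ∀ u v, H.Adj u v → u.isLeft ≠ v.isLeft) :
    IsMinorOf H (chimera (ceilDiv q c) (ceilDiv p c) c) := by
  set r := ceilDiv q c with hr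
  set s := ceilDiv p c with hs
  have hr0 : 0 < r := ceilDiv_pos hc hq
  have hs0 : 0 < s := ceilDiv_pos hc hp
  refine ⟨fun u =>
    match u with
    | Sum.inl i => {v | v.2.1 = ⟨i / c, div_lt_ceilDiv hc i.2⟩ ∧ v.2.2.1 = false ∧
        v.2.2.2 = ⟨i % c, Nat.mod_lt _ hc⟩}
    | Sum.inr j => {v | v.1 = ⟨j / c, div_lt_ceilDiv hc j.2⟩ ∧ v.2.2.1 = true ∧
        v.2.2.2 = ⟨j % c, Nat.mod_lt _ hc⟩}, ?_, ?_, ?_, ?_⟩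
  · rintro (i | j)
    · exact ⟨(⟨0, hr0⟩, ⟨i / c, div_lt_ceilDiv hc i.2⟩, false, ⟨i % c, Nat.mod_lt _ hc⟩),
        rfl, rfl, rfl⟩
    · exact ⟨(⟨j / c, div_lt_ceilDiv hc j.2⟩, ⟨0, hs0⟩, true, ⟨j % c, Nat.mod_lt _ hc⟩),
        rfl, rfl, rfl⟩
  · rintro (i | j)
    · refine connected_of_chain _ _ r hr0
        (fun row => (row, ⟨i / c, div_lt_ceilDiv hc i.2⟩, false, ⟨i % c, Nat.mod_lt _ hc⟩))
        (fun k => ⟨rfl, rfl, rfl⟩) ?_ ?_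
      · rintro ⟨row, col, side, idx⟩ ⟨h1, h2, h3⟩
        exact ⟨row, by simp_all⟩
      · intro k hk
        exact Or.inr (Or.inl ⟨rfl, rfl, rfl, rfl, Or.inl rfl⟩)
    · refine connected_of_chain _ _ s hs0
        (fun col => (⟨j / c, div_lt_ceilDiv hc j.2⟩, col, true, ⟨j % c, Nat.mod_lt _ hc⟩))
        (fun k => ⟨rfl, rfl, rfl⟩) ?_ ?_
      · rintro ⟨row, col, side, idx⟩ ⟨h1, h2, h3⟩
        exact ⟨col, by simp_all⟩
      · intro k hk
        exact Or.inr (Or.inr ⟨rfl, rfl, rfl, rfl, Or.inl rfl⟩)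
  · rintro (i | j) (i' | j') hne <;> rw [Set.disjoint_left] <;>
      rintro ⟨row, col, side, idx⟩ ⟨h1, h2, h3⟩ ⟨h1', h2', h3'⟩
    · apply hne
      have hcol : i / c = i' / c := by
        have h := h1.symm.trans h1'
        rw [Fin.mk.injEq] at h
        exact h
      have hidx : i % c = i' % c := by
        have h := h3.symm.trans h3'
        rw [Fin.mk.injEq] at h
        exact h
      have e1 := Nat.div_add_mod i c
      have e2 := Nat.div_add_mod i' c
      have : (i : ℕ) = (i' : ℕ) := by rw [← e1, ← e2, hcol, hidx]
      exact congrArg Sum.inl (Fin.ext this)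
    · simp_all
    · simp_all
    · apply hne
      have hrow : j / c = j' / c := by
        have h := h1.symm.trans h1'
        rw [Fin.mk.injEq] at h
        exact h
      have hidx : j % c = j' % c := by
        have h := h3.symm.trans h3'
        rw [Fin.mk.injEq] at h
        exact h
      have e1 := Nat.div_add_mod j c
      have e2 := Nat.div_add_mod j' c
      have : (j : ℕ) = (j' : ℕ) := by rw [← e1, ← e2, hrow, hidx]
      exact congrArg Sum.inr (Fin.ext this)
  · rintro (i | j) (i' | j') hadj
    · exact absurd (hbip _ _ hadj) (by simp)
    · refine ⟨(⟨j' / c, div_lt_ceilDiv hc j'.2⟩, ⟨i / c, div_lt_ceilDiv hc i.2⟩, false,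
          ⟨i % c, Nat.mod_lt _ hc⟩), ⟨rfl, rfl, rfl⟩,
        (⟨j' / c, div_lt_ceilDiv hc j'.2⟩, ⟨i / c, div_lt_ceilDiv hc i.2⟩, true,
          ⟨j' % c, Nat.mod_lt _ hc⟩), ⟨rfl, rfl, rfl⟩, ?_⟩
      exact Or.inl ⟨rfl, rfl, by simp⟩
    · refine ⟨(⟨j / c, div_lt_ceilDiv hc j.2⟩, ⟨i' / c, div_lt_ceilDiv hc i'.2⟩, true,
          ⟨j % c, Nat.mod_lt _ hc⟩), ⟨rfl, rfl, rfl⟩,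
        (⟨j / c, div_lt_ceilDiv hc j.2⟩, ⟨i' / c, div_lt_ceilDiv hc i'.2⟩, false,
          ⟨i' % c, Nat.mod_lt _ hc⟩), ⟨rfl, rfl, rfl⟩, ?_⟩
      exact Or.inl ⟨rfl, rfl, by simp⟩
    · exact absurd (hbip _ _ hadj) (by simp)
end

section
/- If G₁ is a minor of H₁ and G₂ is a minor of H₂, and G is the union of G₁ and G₂ glued along a common independent set of vertices each of which is embedded in both H₁ and H₂ with connecting edges available between the two embeddings, then placing H₁ and H₂ in disjoint row-blocks of a Chimera graph with vertical connections merging the shared vertices' subtrees yields G as a minor of the combined Chimera graph. In particular, the interaction graph I_SCP of the Ising Hamiltonian for any SCP instance with |U| = n, |S| = m is a minor of F(f₁, f₂, 4) with f₁ = O(nm²) rows and f₂ = O(m) columns. -/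
/-- A minor embedding of `G` into `G'` via a specific vertex-to-subtree map `φ`. -/
def MinorEmbedding {α β : Type*} (G : SimpleGraph α) (G' : SimpleGraph β)
    (φ : α → Set β) : Prop :=
  (∀ v, (φ v).Nonempty) ∧
  (∀ v, (G'.induce (φ v)).Connected) ∧
  (∀ u v, u ≠ v → Disjoint (φ u) (φ v)) ∧
  (∀ u v, G.Adj u v → ∃ a ∈ φ u, ∃ b ∈ φ v, G'.Adj a b)

/-- Inclusion of the first summand graph's vertices into the glued vertex set. -/
def glueL {V W₁ W₂ : Type*} : V ⊕ W₁ → V ⊕ W₁ ⊕ W₂ :=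
  Sum.elim Sum.inl (fun w => Sum.inr (Sum.inl w))

/-- Inclusion of the second summand graph's vertices into the glued vertex set. -/
def glueR {V W₁ W₂ : Type*} : V ⊕ W₂ → V ⊕ W₁ ⊕ W₂ :=
  Sum.elim Sum.inl (fun w => Sum.inr (Sum.inr w))

lemma glueL_inj {V W₁ W₂ : Type*} : Function.Injective (glueL (V := V) (W₁ := W₁) (W₂ := W₂)) := by
  rintro (v | w) (v' | w') h <;> simp [glueL] at h <;> simp [h]

lemma glueR_inj {V W₁ W₂ : Type*} : Function.Injective (glueR (V := V) (W₁ := W₁) (W₂ := W₂)) := by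
  rintro (v | w) (v' | w') h <;> simp [glueR] at h <;> simp [h]

/-- The union of two graphs `A` on `V ⊕ W₁` and `B` on `V ⊕ W₂`, glued along the common
vertex set `V`. -/
def glue {V W₁ W₂ : Type*} (A : SimpleGraph (V ⊕ W₁)) (B : SimpleGraph (V ⊕ W₂)) :
    SimpleGraph (V ⊕ W₁ ⊕ W₂) where
  Adj x y :=
    (∃ a b : V ⊕ W₁, glueL a = x ∧ glueL b = y ∧ A.Adj a b) ∨
    (∃ a b : V ⊕ W₂, glueR a = x ∧ glueR b = y ∧ B.Adj a b)
  symm := by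
    constructor
    rintro x y (⟨a, b, ha, hb, hab⟩ | ⟨a, b, ha, hb, hab⟩)
    · exact Or.inl ⟨b, a, hb, ha, hab.symm⟩
    · exact Or.inr ⟨b, a, hb, ha, hab.symm⟩
  loopless := by
    constructor
    rintro x (⟨a, b, ha, hb, hab⟩ | ⟨a, b, ha, hb, hab⟩)
    · have : a = b := glueL_inj (ha.trans hb.symm)
      exact A.loopless.irrefl _ (this ▸ hab)
    · have : a = b := glueR_inj (ha.trans hb.symm)
      exact B.loopless.irrefl _ (this ▸ hab)

/-!
The two minor embeddings are pushed into `F(r₁ + r₂, s, c)` by shifting rows, into the top and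
the bottom block respectively. The images are disjoint, so every vertex keeps a connected chain
and every edge stays realized; the two chains of a shared vertex are joined by the vertical edge
between the last row of the top block and the first row of the bottom block.

For `I_SCP`, `s_i` becomes a whole left column (column `i / 4`, index `i % 4`). The gadget
vertices receive distinct rows `k m² + p`, where `p` is the position of the vertex in an ordering
of `L_{r_k}` in which every edge has length at most two. A gadget vertex in row `ρ` becomes the
right row `ρ`, which crosses every `s`-column and so realizes every edge to an `s_i`, together with
a left segment covering rows `ρ` to `ρ + 2` in one of two extra columns. Neighbours inside a gadget
lie at most two rows apart, so the segment of the upper one meets the right row of the lower one.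
-/

open Function

namespace SimpleGraph

variable {α β γ : Type*} {G : SimpleGraph α} {G' : SimpleGraph β}

theorem Connected.induce_range {H : SimpleGraph γ} (hH : H.Connected) (f : H →g G) :
    (G.induce (Set.range f)).Connected :=
  hH.map ⟨Set.rangeFactorization f, f.map_adj⟩ Set.rangeFactorization_surjective

theorem Connected.induce_image {S : Set α} (hS : (G.induce S).Connected) (f : G →g G') :
    (G'.induce (f '' S)).Connected := by
  rw [Set.image_eq_range]
  exact hS.induce_range (f.comp (Embedding.induce S).toHom)

end SimpleGraph

section Glue

variable {V W₁ W₂ β₁ β₂ β : Type*} {A : SimpleGraph (V ⊕ W₁)} {B : SimpleGraph (V ⊕ W₂)}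
  {H₁ : SimpleGraph β₁} {H₂ : SimpleGraph β₂} {H : SimpleGraph β}
  {φ₁ : V ⊕ W₁ → Set β₁} {φ₂ : V ⊕ W₂ → Set β₂}

def glueSets (ι₁ : β₁ → β) (ι₂ : β₂ → β) (φ₁ : V ⊕ W₁ → Set β₁) (φ₂ : V ⊕ W₂ → Set β₂) :
    V ⊕ W₁ ⊕ W₂ → Set β :=
  Sum.elim (fun v => ι₁ '' φ₁ (.inl v) ∪ ι₂ '' φ₂ (.inl v))
    (Sum.elim (fun w => ι₁ '' φ₁ (.inr w)) (fun w => ι₂ '' φ₂ (.inr w)))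

theorem mem_glueSets {ι₁ : β₁ → β} {ι₂ : β₂ → β} {u : V ⊕ W₁ ⊕ W₂} {x : β} :
    x ∈ glueSets ι₁ ι₂ φ₁ φ₂ u ↔
      (∃ a, glueL a = u ∧ x ∈ ι₁ '' φ₁ a) ∨ (∃ b, glueR b = u ∧ x ∈ ι₂ '' φ₂ b) := by
  rcases u with v | w | w <;> simp [glueSets, glueL, glueR]

theorem image_subset_glueSets_glueL (ι₁ : β₁ → β) (ι₂ : β₂ → β) (a : V ⊕ W₁) :
    ι₁ '' φ₁ a ⊆ glueSets ι₁ ι₂ φ₁ φ₂ (glueL a) :=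
  fun _ hx => mem_glueSets.2 (.inl ⟨a, rfl, hx⟩)

theorem image_subset_glueSets_glueR (ι₁ : β₁ → β) (ι₂ : β₂ → β) (b : V ⊕ W₂) :
    ι₂ '' φ₂ b ⊆ glueSets ι₁ ι₂ φ₁ φ₂ (glueR b) :=
  fun _ hx => mem_glueSets.2 (.inr ⟨b, rfl, hx⟩)

theorem MinorEmbedding.glue (h₁ : MinorEmbedding A H₁ φ₁) (h₂ : MinorEmbedding B H₂ φ₂)
    (ι₁ : H₁ →g H) (ι₂ : H₂ →g H) (hι₁ : Injective ι₁) (hι₂ : Injective ι₂)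
    (hι : ∀ x y, ι₁ x ≠ ι₂ y)
    (hlink : ∀ v, ∃ a ∈ φ₁ (.inl v), ∃ b ∈ φ₂ (.inl v), H.Adj (ι₁ a) (ι₂ b)) :
    MinorEmbedding (glue A B) H (glueSets ι₁ ι₂ φ₁ φ₂) := by
  obtain ⟨hne₁, hconn₁, hdisj₁, hedge₁⟩ := h₁
  obtain ⟨hne₂, hconn₂, hdisj₂, hedge₂⟩ := h₂
  refine ⟨?_, ?_, ?_, ?_⟩
  · rintro (v | w | w)
    · exact ((hne₁ _).image ι₁).inl
    · exact (hne₁ _).image ι₁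
    · exact (hne₂ _).image ι₂
  · rintro (v | w | w)
    · obtain ⟨a, ha, b, hb, hab⟩ := hlink v
      exact SimpleGraph.connected_induce_union ((hconn₁ _).induce_image ι₁).preconnected
        ((hconn₂ _).induce_image ι₂).preconnected ⟨a, ha, rfl⟩ ⟨b, hb, rfl⟩ hab
    · exact (hconn₁ _).induce_image ι₁
    · exact (hconn₂ _).induce_image ι₂
  · intro u v huv
    refine Set.disjoint_left.2 fun x hu hv => ?_
    rw [mem_glueSets] at hu hv
    rcases hu with ⟨a, rfl, p, hp, rfl⟩ | ⟨b, rfl, q, hq, rfl⟩ <;>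
      rcases hv with ⟨a', rfl, p', hp', hx⟩ | ⟨b', rfl, q', hq', hx⟩
    · obtain rfl := hι₁ hx
      obtain rfl : a = a' := by_contra fun hne => Set.disjoint_left.1 (hdisj₁ _ _ hne) hp hp'
      exact huv rfl
    · exact hι _ _ hx.symm
    · exact hι _ _ hx
    · obtain rfl := hι₂ hx
      obtain rfl : b = b' := by_contra fun hne => Set.disjoint_left.1 (hdisj₂ _ _ hne) hq hq'
      exact huv rfl
  · rintro _ _ (⟨a, b, rfl, rfl, hab⟩ | ⟨a, b, rfl, rfl, hab⟩)
    · obtain ⟨x, hx, y, hy, hxy⟩ := hedge₁ a b hab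
      exact ⟨ι₁ x, image_subset_glueSets_glueL ι₁ ι₂ a ⟨x, hx, rfl⟩,
        ι₁ y, image_subset_glueSets_glueL ι₁ ι₂ b ⟨y, hy, rfl⟩, ι₁.map_adj hxy⟩
    · obtain ⟨x, hx, y, hy, hxy⟩ := hedge₂ a b hab
      exact ⟨ι₂ x, image_subset_glueSets_glueR ι₁ ι₂ a ⟨x, hx, rfl⟩,
        ι₂ y, image_subset_glueSets_glueR ι₁ ι₂ b ⟨y, hy, rfl⟩, ι₂.map_adj hxy⟩

end Glue

section ChimeraStack

variable {r r' s c : ℕ}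

def chimeraRowShift (f : Fin r → Fin r') (d : ℕ) (hf : ∀ a, (f a : ℕ) = a + d) :
    chimera r s c →g chimera r' s c where
  toFun x := (f x.1, x.2)
  map_rel' := by
    have hf' : ∀ a b, f a = f b ↔ a = b := fun a b => by simp only [Fin.ext_iff, hf]; omega
    rintro v w (⟨h₁, h₂, h₃⟩ | ⟨h₁, h₂, h₃, h₄, h₅⟩ | ⟨h₁, h₂, h₃, h₄, h₅⟩)
    · exact .inl ⟨(hf' _ _).2 h₁, h₂, h₃⟩
    · exact .inr (.inl ⟨h₁, h₂, h₃, h₄, by simp only [hf]; omega⟩)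
    · exact .inr (.inr ⟨h₁, h₂, (hf' _ _).2 h₃, h₄, h₅⟩)

theorem chimeraRowShift_injective (f : Fin r → Fin r') (d : ℕ) (hf : ∀ a, (f a : ℕ) = a + d) :
    Injective (chimeraRowShift (s := s) (c := c) f d hf) := by
  rintro ⟨a, x⟩ ⟨b, y⟩ h
  simp only [chimeraRowShift, RelHom.coeFn_mk, Prod.mk.injEq, Fin.ext_iff, hf] at h
  obtain ⟨hab, rfl⟩ := h
  obtain rfl : a = b := Fin.ext (by omega)
  rfl

end ChimeraStack

theorem glue_isMinorOf_chimera_add {V W₁ W₂ : Type*} {A : SimpleGraph (V ⊕ W₁)}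
    {B : SimpleGraph (V ⊕ W₂)} {r₁ r₂ s c : ℕ} (hr₁ : 0 < r₁) (hr₂ : 0 < r₂)
    {φ₁ : V ⊕ W₁ → Set (Fin r₁ × Fin s × Bool × Fin c)}
    {φ₂ : V ⊕ W₂ → Set (Fin r₂ × Fin s × Bool × Fin c)}
    (h₁ : MinorEmbedding A (chimera r₁ s c) φ₁) (h₂ : MinorEmbedding B (chimera r₂ s c) φ₂)
    (hlink : ∀ v : V, ∃ (col : Fin s) (i : Fin c),
      (⟨⟨r₁ - 1, Nat.sub_lt hr₁ Nat.one_pos⟩, col, false, i⟩ ∈ φ₁ (Sum.inl v)) ∧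
      (⟨⟨0, hr₂⟩, col, false, i⟩ ∈ φ₂ (Sum.inl v))) :
    IsMinorOf (glue A B) (chimera (r₁ + r₂) s c) := by
  let ι₁ : chimera r₁ s c →g chimera (r₁ + r₂) s c :=
    chimeraRowShift (Fin.castAdd r₂) 0 fun _ => rfl
  let ι₂ : chimera r₂ s c →g chimera (r₁ + r₂) s c :=
    chimeraRowShift (Fin.natAdd r₁) r₁ fun _ => by simp [add_comm]
  refine ⟨_, h₁.glue h₂ ι₁ ι₂ (chimeraRowShift_injective _ _ _)
    (chimeraRowShift_injective _ _ _) ?_ fun v => ?_⟩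
  · rintro ⟨a, x⟩ ⟨b, y⟩ h
    have := congrArg (fun z => (z.1 : ℕ)) h
    simp only [ι₁, ι₂, chimeraRowShift, RelHom.coeFn_mk, Fin.val_castAdd, Fin.val_natAdd] at this
    omega
  · obtain ⟨col, i, hv₁, hv₂⟩ := hlink v
    refine ⟨_, hv₁, _, hv₂, .inr (.inl ⟨rfl, rfl, rfl, rfl, .inl ?_⟩)⟩
    simp only [ι₁, ι₂, chimeraRowShift, RelHom.coeFn_mk, Fin.castAdd_mk, Fin.natAdd_mk, add_zero]
    omega

section ChimeraLines

open SimpleGraph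

variable {r s c : ℕ}

def leftSegment (col i a b : ℕ) : Set (Fin r × Fin s × Bool × Fin c) :=
  {x | (x.2.1 : ℕ) = col ∧ x.2.2.1 = false ∧ (x.2.2.2 : ℕ) = i ∧ a ≤ x.1 ∧ (x.1 : ℕ) ≤ b}

def rightRow (row i : ℕ) : Set (Fin r × Fin s × Bool × Fin c) :=
  {x | (x.1 : ℕ) = row ∧ x.2.2.1 = true ∧ (x.2.2.2 : ℕ) = i}

theorem leftSegment_connected {col i a b : ℕ} (hcol : col < s) (hi : i < c) (hab : a ≤ b)
    (hb : b < r) : ((chimera r s c).induce (leftSegment col i a b)).Connected := by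
  let f (j : Fin (b - a + 1)) : Fin r × Fin s × Bool × Fin c :=
    (⟨a + j, by omega⟩, ⟨col, hcol⟩, false, ⟨i, hi⟩)
  have hf : ∀ {j k}, (pathGraph _).Adj j k → (chimera r s c).Adj (f j) (f k) := fun h =>
    .inr (.inl ⟨rfl, rfl, rfl, rfl, by simp only [pathGraph_adj] at h; dsimp only [f]; omega⟩)
  have hrange : leftSegment col i a b = Set.range f := by
    ext ⟨⟨x, hx⟩, ⟨y, hy⟩, side, ⟨z, hz⟩⟩
    simp only [leftSegment, Set.mem_ofPred_eq, Set.mem_range, f, Prod.mk.injEq, Fin.ext_iff,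
      Fin.exists_iff]
    constructor
    · rintro ⟨rfl, rfl, rfl, h₁, h₂⟩
      exact ⟨x - a, by omega, by omega, rfl, rfl, rfl⟩
    · rintro ⟨j, hj, h₁, rfl, rfl, rfl⟩
      exact ⟨rfl, rfl, rfl, by omega, by omega⟩
  rw [hrange]
  exact (pathGraph_connected _).induce_range ⟨f, hf⟩

theorem rightRow_connected {row i : ℕ} (hrow : row < r) (hs : 0 < s) (hi : i < c) :
    ((chimera r s c).induce (rightRow row i)).Connected := by
  obtain ⟨s, rfl⟩ : ∃ s', s = s' + 1 := ⟨s - 1, by omega⟩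
  let f (j : Fin (s + 1)) : Fin r × Fin (s + 1) × Bool × Fin c := (⟨row, hrow⟩, j, true, ⟨i, hi⟩)
  have hf : ∀ {j k}, (pathGraph _).Adj j k → (chimera r (s + 1) c).Adj (f j) (f k) := fun h =>
    .inr (.inr ⟨rfl, rfl, rfl, rfl, pathGraph_adj.1 h⟩)
  have hrange : rightRow row i = Set.range f := by
    ext ⟨⟨x, hx⟩, y, side, ⟨z, hz⟩⟩
    simp only [rightRow, Set.mem_ofPred_eq, Set.mem_range, f, Prod.mk.injEq, Fin.ext_iff]
    constructor
    · rintro ⟨rfl, rfl, rfl⟩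
      exact ⟨y, rfl, rfl, rfl, rfl⟩
    · rintro ⟨j, rfl, -, rfl, rfl⟩
      exact ⟨rfl, rfl, rfl⟩
  rw [hrange]
  exact (pathGraph_connected _).induce_range ⟨f, hf⟩

theorem exists_adj_leftSegment_rightRow {col i j a b row : ℕ} (hcol : col < s) (hi : i < c)
    (hj : j < c) (hrow : row < r) (ha : a ≤ row) (hb : row ≤ b) :
    ∃ x ∈ leftSegment col i a b, ∃ y ∈ rightRow row j, (chimera r s c).Adj x y :=
  ⟨(⟨row, hrow⟩, ⟨col, hcol⟩, false, ⟨i, hi⟩), ⟨rfl, rfl, rfl, ha, hb⟩,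
    (⟨row, hrow⟩, ⟨col, hcol⟩, true, ⟨j, hj⟩), ⟨rfl, rfl, rfl⟩, .inl ⟨rfl, rfl, by simp⟩⟩

theorem disjoint_leftSegment_rightRow {col i a b row j : ℕ} :
    Disjoint (leftSegment col i a b : Set (Fin r × Fin s × Bool × Fin c)) (rightRow row j) :=
  Set.disjoint_left.2 fun _ hx hy => by simp_all [leftSegment, rightRow]

theorem disjoint_rightRow {row row' i i' : ℕ} (h : row ≠ row') :
    Disjoint (rightRow row i : Set (Fin r × Fin s × Bool × Fin c)) (rightRow row' i') :=
  Set.disjoint_left.2 fun _ hx hy => h (hx.1.symm.trans hy.1)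

theorem disjoint_leftSegment {col i a b col' i' a' b' : ℕ}
    (h : col ≠ col' ∨ i ≠ i' ∨ b < a' ∨ b' < a) :
    Disjoint (leftSegment col i a b : Set (Fin r × Fin s × Bool × Fin c))
      (leftSegment col' i' a' b') :=
  Set.disjoint_left.2 fun _ ⟨h₁, _, h₃, h₄, h₅⟩ ⟨h₁', _, h₃', h₄', h₅'⟩ => by omega

end ChimeraLines

section LnLayout

/-- Orders the vertices of `L_n` as `t₀, t₁, x₀, t₂, x₁, t₃, x₂, …`; in this order every edge
joins vertices at distance at most two. -/
def lnLayout {a b : ℕ} : Fin a ⊕ Fin b → ℕ :=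
  Sum.elim (fun t => if (t : ℕ) = 0 then 0 else 2 * t - 1) (fun x => 2 * x + 2)

theorem lnLayout_injective {a b : ℕ} : Injective (lnLayout : Fin a ⊕ Fin b → ℕ) := by
  rintro (t | x) (t' | x') h <;> simp only [lnLayout, Sum.elim_inl, Sum.elim_inr] at h
  · exact congrArg _ (Fin.ext (by split_ifs at h <;> omega))
  · split_ifs at h; omega
  · split_ifs at h; omega
  · exact congrArg _ (Fin.ext (by omega))

theorem lnLayout_add_two_le {a : ℕ} (j : Fin a ⊕ Fin (a - 1)) : lnLayout j + 2 ≤ 2 * a := by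
  rcases j with t | x
  · have := t.2
    simp only [lnLayout, Sum.elim_inl]
    split_ifs <;> omega
  · have := x.2
    simp only [lnLayout, Sum.elim_inr]
    omega

theorem lnLayout_le_add_two_of_adj {a : ℕ} {j j' : Fin a ⊕ Fin (a - 1)} (h : (Ln a).Adj j j') :
    lnLayout j' ≤ lnLayout j + 2 := by
  rcases j with t | x <;> rcases j' with t' | x' <;> simp only [Ln] at h <;>
    simp only [lnLayout, Sum.elim_inl, Sum.elim_inr] <;> first | omega | (split_ifs <;> omega)

end LnLayout

section SCPLayout

def scpRow (m : ℕ) {n : ℕ} (r : Fin n → ℕ) (b : Σ k : Fin n, Fin (r k) ⊕ Fin (r k - 1)) : ℕ :=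
  b.1 * m ^ 2 + lnLayout b.2

variable {n m : ℕ} {r : Fin n → ℕ}

theorem lnLayout_add_two_le_sq (hr : ∀ k, r k ≤ m * (m - 1) / 2) {k : Fin n}
    (j : Fin (r k) ⊕ Fin (r k - 1)) : lnLayout j + 2 ≤ m ^ 2 := by
  have h₁ : 2 * (m * (m - 1) / 2) ≤ m * (m - 1) := Nat.mul_div_le _ _
  have h₂ : m * (m - 1) ≤ m ^ 2 := by rw [sq]; exact Nat.mul_le_mul_left _ (Nat.sub_le _ _)
  have := lnLayout_add_two_le j
  have := hr k
  omega

theorem scpRow_lt (hr : ∀ k, r k ≤ m * (m - 1) / 2) (b : Σ k : Fin n, Fin (r k) ⊕ Fin (r k - 1)) :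
    scpRow m r b < n * m ^ 2 := by
  have := lnLayout_add_two_le_sq hr b.2
  calc scpRow m r b < (b.1 + 1) * m ^ 2 := by rw [scpRow, add_mul]; omega
    _ ≤ n * m ^ 2 := Nat.mul_le_mul_right _ b.1.2

theorem scpRow_injective (hr : ∀ k, r k ≤ m * (m - 1) / 2) : Injective (scpRow m r) := by
  rintro ⟨k, j⟩ ⟨k', j'⟩ h
  have hj := lnLayout_add_two_le_sq hr j
  have hj' := lnLayout_add_two_le_sq hr j'
  have hdiv : ∀ (k p : ℕ), p < m ^ 2 → (k * m ^ 2 + p) / m ^ 2 = k := fun k p hp => by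
    rw [add_comm, Nat.add_mul_div_right _ _ (by omega), Nat.div_eq_of_lt hp, zero_add]
  obtain rfl : k = k' := Fin.ext <| by
    rw [← hdiv k (lnLayout j) (by omega), ← hdiv k' (lnLayout j') (by omega)]
    exact congrArg (· / m ^ 2) h
  obtain rfl : j = j' := lnLayout_injective (by simpa [scpRow] using h)
  rfl

end SCPLayout

section SCPSets

variable {R w : ℕ}

def sSet (i : ℕ) : Set (Fin R × Fin (w + 2) × Bool × Fin 4) :=
  leftSegment (i / 4) (i % 4) 0 (R - 1)

/-- The column and index of the segment repeat only when `ρ` changes by a multiple of `8`, so the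
segments of distinct rows never overlap. -/
def gadgetSet (w ρ : ℕ) : Set (Fin R × Fin (w + 2) × Bool × Fin 4) :=
  rightRow ρ 0 ∪ leftSegment (w + ρ % 2) (ρ / 2 % 4) ρ (ρ + 2)

theorem sSet_connected {i : ℕ} (hi : i < 4 * w) (hR : 0 < R) :
    ((chimera R (w + 2) 4).induce (sSet i)).Connected :=
  leftSegment_connected (by omega) (by omega) (Nat.zero_le _) (by omega)

theorem gadgetSet_connected {ρ : ℕ} (hρ : ρ + 2 < R) :
    ((chimera R (w + 2) 4).induce (gadgetSet w ρ)).Connected := by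
  obtain ⟨x, hx, y, hy, hxy⟩ := exists_adj_leftSegment_rightRow (r := R) (s := w + 2) (c := 4)
    (col := w + ρ % 2) (i := ρ / 2 % 4) (j := 0) (a := ρ) (b := ρ + 2) (row := ρ)
    (by omega) (by omega) (by omega) (by omega) le_rfl (by omega)
  exact SimpleGraph.connected_induce_union
    (rightRow_connected (by omega) (by omega) (by omega)).preconnected
    (leftSegment_connected (by omega) (by omega) (by omega) hρ).preconnected hy hx hxy.symm

theorem disjoint_sSet {i i' : ℕ} (h : i ≠ i') :
    Disjoint (sSet i : Set (Fin R × Fin (w + 2) × Bool × Fin 4)) (sSet i') :=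
  disjoint_leftSegment (by omega)

theorem disjoint_sSet_gadgetSet {i ρ : ℕ} (hi : i < 4 * w) :
    Disjoint (sSet i : Set (Fin R × Fin (w + 2) × Bool × Fin 4)) (gadgetSet w ρ) :=
  Set.disjoint_union_right.2 ⟨disjoint_leftSegment_rightRow, disjoint_leftSegment (by omega)⟩

theorem disjoint_gadgetSet {ρ ρ' : ℕ} (h : ρ ≠ ρ') :
    Disjoint (gadgetSet w ρ : Set (Fin R × Fin (w + 2) × Bool × Fin 4)) (gadgetSet w ρ') :=
  Set.disjoint_union_left.2
    ⟨Set.disjoint_union_right.2 ⟨disjoint_rightRow h, disjoint_leftSegment_rightRow.symm⟩,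
      Set.disjoint_union_right.2 ⟨disjoint_leftSegment_rightRow, disjoint_leftSegment (by omega)⟩⟩

theorem exists_adj_sSet_gadgetSet {i ρ : ℕ} (hi : i < 4 * w) (hρ : ρ < R) :
    ∃ x ∈ (sSet i : Set (Fin R × Fin (w + 2) × Bool × Fin 4)), ∃ y ∈ gadgetSet w ρ,
      (chimera R (w + 2) 4).Adj x y := by
  obtain ⟨x, hx, y, hy, hxy⟩ := exists_adj_leftSegment_rightRow (j := 0) (a := 0) (b := R - 1)
    (r := R) (s := w + 2) (c := 4) (by omega : i / 4 < w + 2) (Nat.mod_lt i (by omega))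
    (by omega) hρ (Nat.zero_le _) (by omega)
  exact ⟨x, hx, y, .inl hy, hxy⟩

theorem exists_adj_gadgetSet {ρ ρ' : ℕ} (hne : ρ ≠ ρ') (h₁ : ρ' ≤ ρ + 2) (h₂ : ρ ≤ ρ' + 2)
    (hρ : ρ < R) (hρ' : ρ' < R) :
    ∃ x ∈ (gadgetSet w ρ : Set (Fin R × Fin (w + 2) × Bool × Fin 4)), ∃ y ∈ gadgetSet w ρ',
      (chimera R (w + 2) 4).Adj x y := by
  rcases hne.lt_or_gt with hlt | hlt
  · obtain ⟨x, hx, y, hy, hxy⟩ := exists_adj_leftSegment_rightRow (j := 0) (a := ρ) (b := ρ + 2)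
      (r := R) (s := w + 2) (c := 4) (col := w + ρ % 2) (i := ρ / 2 % 4) (by omega) (by omega)
      (by omega) hρ' hlt.le h₁
    exact ⟨x, .inr hx, y, .inl hy, hxy⟩
  · obtain ⟨x, hx, y, hy, hxy⟩ := exists_adj_leftSegment_rightRow (j := 0) (a := ρ')
      (b := ρ' + 2) (r := R) (s := w + 2) (c := 4) (col := w + ρ' % 2) (i := ρ' / 2 % 4)
      (by omega) (by omega) (by omega) hρ hlt.le h₂
    exact ⟨y, .inl hy, x, .inr hx, hxy.symm⟩

end SCPSets

def scpSets (m : ℕ) {n : ℕ} (r : Fin n → ℕ) :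
    Fin m ⊕ (Σ k : Fin n, Fin (r k) ⊕ Fin (r k - 1)) →
      Set (Fin (n * m ^ 2 + 2) × Fin ((m + 3) / 4 + 2) × Bool × Fin 4) :=
  Sum.elim (fun i => sSet i) (fun b => gadgetSet ((m + 3) / 4) (scpRow m r b))

theorem minorEmbedding_scpSets {n m : ℕ} {r : Fin n → ℕ} (hr : ∀ k, r k ≤ m * (m - 1) / 2)
    {G : SimpleGraph (Fin m ⊕ Σ k : Fin n, Fin (r k) ⊕ Fin (r k - 1))}
    (hss : ∀ i j : Fin m, ¬ G.Adj (.inl i) (.inl j))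
    (hblk : ∀ k a b, G.Adj (.inr ⟨k, a⟩) (.inr ⟨k, b⟩) → (Ln (r k)).Adj a b)
    (hsep : ∀ k k', k ≠ k' → ∀ a b, ¬ G.Adj (.inr ⟨k, a⟩) (.inr ⟨k', b⟩)) :
    MinorEmbedding G (chimera (n * m ^ 2 + 2) ((m + 3) / 4 + 2) 4) (scpSets m r) := by
  have hi (i : Fin m) : (i : ℕ) < 4 * ((m + 3) / 4) := by omega
  have hρ := scpRow_lt hr
  have hconn : ∀ v, ((chimera _ _ 4).induce (scpSets m r v)).Connected := by
    rintro (i | b)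
    · exact sSet_connected (hi i) (by omega)
    · exact gadgetSet_connected (by have := hρ b; omega)
  refine ⟨fun v => Set.nonempty_coe_sort.1 (hconn v).nonempty, hconn, ?_, ?_⟩
  · rintro (i | b) (i' | b') huv
    · exact disjoint_sSet (fun h => huv (congrArg _ (Fin.ext h)))
    · exact disjoint_sSet_gadgetSet (hi i)
    · exact (disjoint_sSet_gadgetSet (hi i')).symm
    · exact disjoint_gadgetSet ((scpRow_injective hr).ne fun h => huv (congrArg _ h))
  · rintro (i | ⟨k, j⟩) (i' | ⟨k', j'⟩) hadj
    · exact absurd hadj (hss i i')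
    · exact exists_adj_sSet_gadgetSet (hi i) (by have := hρ ⟨k', j'⟩; omega)
    · obtain ⟨x, hx, y, hy, hxy⟩ := exists_adj_sSet_gadgetSet (R := n * m ^ 2 + 2)
        (ρ := scpRow m r ⟨k, j⟩) (hi i') (by have := hρ ⟨k, j⟩; omega)
      exact ⟨y, hy, x, hx, hxy.symm⟩
    · obtain rfl | hkk := eq_or_ne k k'
      · have hL := hblk k j j' hadj
        have hne : scpRow m r ⟨k, j⟩ ≠ scpRow m r ⟨k, j'⟩ :=
          (scpRow_injective hr).ne fun h => hL.ne (by simpa using h)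
        have h₁ := lnLayout_le_add_two_of_adj hL
        have h₂ := lnLayout_le_add_two_of_adj hL.symm
        exact exists_adj_gadgetSet hne (by simp only [scpRow]; omega)
          (by simp only [scpRow]; omega) (by have := hρ ⟨k, j⟩; omega)
          (by have := hρ ⟨k, j'⟩; omega)
      · exact absurd hadj (hsep k k' hkk j j')

/-- (1) Gluing of minor embeddings on a Chimera graph: if `A` (on `V ⊕ W₁`)
is minor-embedded in `F(r₁,s,c)` and `B` (on `V ⊕ W₂`) in `F(r₂,s,c)`, the common vertex
set `V` is independent in both, and for each shared vertex its subtree in the first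
embedding contains a left vertex in the bottom row matching (same column and index) a left
vertex in the top row of its subtree in the second embedding (so a vertical connecting edge
is available to merge the two subtrees), then the glued graph is a minor of the stacked
Chimera graph `F(r₁+r₂, s, c)`.  (2) In particular, the interaction graph `I_SCP` of the
Ising Hamiltonian of any SCP instance with `|U| = n`, `|S| = m` — which consists of the
`s`-vertices, and for each ground element `k` a block of `r k` pair-vertices and
`r k - 1` chain-vertices forming the gadget `L_{r k}`, with the only further edges being
bipartite edges between `s`-vertices and pair-vertices — is a minor of `F(f₁, f₂, 4)` with
`f₁ = O(nm²)` rows and `f₂ = O(m)` columns. -/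
theorem stmt_16 :
    (∀ (V W₁ W₂ : Type) (A : SimpleGraph (V ⊕ W₁)) (B : SimpleGraph (V ⊕ W₂))
        (r₁ r₂ s c : ℕ) (hr₁ : 0 < r₁) (hr₂ : 0 < r₂)
        (φ₁ : V ⊕ W₁ → Set (Fin r₁ × Fin s × Bool × Fin c))
        (φ₂ : V ⊕ W₂ → Set (Fin r₂ × Fin s × Bool × Fin c)),
        (∀ u v : V, ¬ A.Adj (Sum.inl u) (Sum.inl v)) →
        (∀ u v : V, ¬ B.Adj (Sum.inl u) (Sum.inl v)) →
        MinorEmbedding A (chimera r₁ s c) φ₁ →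
        MinorEmbedding B (chimera r₂ s c) φ₂ →
        (∀ v : V, ∃ (col : Fin s) (i : Fin c),
            (⟨⟨r₁ - 1, by omega⟩, col, false, i⟩ ∈ φ₁ (Sum.inl v)) ∧
            (⟨⟨0, hr₂⟩, col, false, i⟩ ∈ φ₂ (Sum.inl v))) →
        IsMinorOf (glue A B) (chimera (r₁ + r₂) s c)) ∧
    (∃ C : ℕ, 0 < C ∧ ∀ (n m : ℕ) (r : Fin n → ℕ),
        (∀ k, 1 ≤ r k) → (∀ k, r k ≤ m * (m - 1) / 2) →
        ∀ (G : SimpleGraph ((Fin m) ⊕ (Σ k : Fin n, (Fin (r k) ⊕ Fin (r k - 1))))),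
        (∀ i j : Fin m, ¬ G.Adj (Sum.inl i) (Sum.inl j)) →
        (∀ (k : Fin n) (a b : Fin (r k) ⊕ Fin (r k - 1)),
            G.Adj (Sum.inr ⟨k, a⟩) (Sum.inr ⟨k, b⟩) ↔ (Ln (r k)).Adj a b) →
        (∀ (k k' : Fin n), k ≠ k' → ∀ a b,
            ¬ G.Adj (Sum.inr ⟨k, a⟩) (Sum.inr ⟨k', b⟩)) →
        (∀ (i : Fin m) (k : Fin n) (x : Fin (r k - 1)),
            ¬ G.Adj (Sum.inl i) (Sum.inr ⟨k, Sum.inr x⟩)) →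
        ∃ f₁ f₂ : ℕ, f₁ ≤ C * (n * m ^ 2 + 1) ∧ f₂ ≤ C * (m + 1) ∧
          IsMinorOf G (chimera f₁ f₂ 4)) := by
  refine ⟨fun V W₁ W₂ A B r₁ r₂ s c hr₁ hr₂ φ₁ φ₂ _ _ h₁ h₂ hlink =>
    glue_isMinorOf_chimera_add hr₁ hr₂ h₁ h₂ hlink, 2, two_pos, ?_⟩
  intro n m r _ hr G hss hblk hsep _
  exact ⟨n * m ^ 2 + 2, (m + 3) / 4 + 2, by omega, by omega, _,
    minorEmbedding_scpSets hr hss (fun k a b => (hblk k a b).1) hsep⟩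
end
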